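/- arXiv:1310.0865 — 2 statements merged into one kernel-verified Lean document; each statement's English description precedes it below -/
import Mathlib

section
/- For any matrix P ∈ ℝ^{N×T} with rank R, the square root of its nuclear norm equals the minimum of (1/2)(‖F‖_F + ‖G‖_F) over all factorizations P = F Gᵀ with F ∈ ℝ^{N×R}, G ∈ ℝ^{T×R}. -/
/-!
Let `μᵢ, vᵢ` be the eigenvalues and an orthonormal eigenbasis of `PᵀP`, so that
`‖P‖_* = ∑ √μᵢ`, and for `μᵢ ≠ 0` the vectors `uᵢ = μᵢ^(-1/2) P vᵢ` are orthonormal with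
`uᵢᵀ P vᵢ = √μᵢ`. If `P = F Gᵀ`, then `∑ uᵢᵀ F Gᵀ vᵢ = ∑ᵢₖ (Fᵀuᵢ)ₖ (Gᵀvᵢ)ₖ ≤ ‖F‖_F ‖G‖_F` by
Cauchy–Schwarz and Bessel's inequality, hence `√‖P‖_* ≤ √(‖F‖_F ‖G‖_F) ≤ (‖F‖_F + ‖G‖_F) / 2`.
The minimum is attained by the factorization whose `R` columns are `μᵢ^(-1/4) P vᵢ` and
`μᵢ^(1/4) vᵢ` for `μᵢ ≠ 0`: both factors then have Frobenius norm `√‖P‖_*`.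
-/

open Matrix

noncomputable def frob {m n : Type*} [Fintype m] [Fintype n] (M : Matrix m n ℝ) : ℝ :=
  Real.sqrt (∑ i, ∑ j, (M i j) ^ 2)

theorem Matrix.isHermitian_transpose_mul_self {m n α : Type*} [Fintype m] [CommSemiring α]
    [StarRing α] [TrivialStar α] (A : Matrix m n α) : (Aᵀ * A).IsHermitian := by
  rw [IsHermitian, conjTranspose_eq_transpose_of_trivial, transpose_mul, transpose_transpose]

noncomputable def nuclearNorm {N T : ℕ} (P : Matrix (Fin N) (Fin T) ℝ) : ℝ :=
  ∑ i, Real.sqrt ((Matrix.isHermitian_transpose_mul_self P).eigenvalues i)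

theorem Fintype.sum_subtype_of_eq_zero {ι M : Type*} [Fintype ι] [AddCommMonoid M]
    (p : ι → Prop) [DecidablePred p] {f : ι → M} (hf : ∀ i, ¬p i → f i = 0) :
    ∑ i : {i // p i}, f i = ∑ i, f i := by
  have hzero : ∑ i : {i // ¬p i}, f i = 0 := Finset.sum_eq_zero fun i _ => hf i i.2
  rw [← Fintype.sum_subtype_add_sum_subtype p f, hzero, add_zero]

section Frobenius

variable {ι κ m n : Type*} [Fintype κ] [Fintype m] [Fintype n]

theorem frob_nonneg (M : Matrix m n ℝ) : 0 ≤ frob M := Real.sqrt_nonneg _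

theorem frob_transpose_of (c : n → m → ℝ) : frob (of c)ᵀ = √(∑ j, c j ⬝ᵥ c j) := by
  rw [frob, Finset.sum_comm]
  simp only [transpose_apply, of_apply, dotProduct, sq]

theorem sum_sum_mul_le_frob_mul_frob (A B : Matrix m n ℝ) :
    ∑ i, ∑ j, A i j * B i j ≤ frob A * frob B := by
  have := Real.sum_mul_le_sqrt_mul_sqrt Finset.univ (fun p : m × n => A p.1 p.2)
    (fun p => B p.1 p.2)
  simpa only [frob, Fintype.sum_prod_type] using this

theorem dotProduct_eq_ite_of_orthonormal [DecidableEq ι] {u : ι → EuclideanSpace ℝ m}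
    (hu : Orthonormal ℝ u) (i j : ι) : ⇑(u i) ⬝ᵥ ⇑(u j) = if i = j then 1 else 0 := by
  rw [← orthonormal_iff_ite.mp hu i j, EuclideanSpace.inner_eq_star_dotProduct, star_trivial,
    dotProduct_comm]

theorem sum_sq_dotProduct_le_of_orthonormal [Fintype ι] {u : ι → EuclideanSpace ℝ m}
    (hu : Orthonormal ℝ u) (x : m → ℝ) : ∑ i, (⇑(u i) ⬝ᵥ x) ^ 2 ≤ x ⬝ᵥ x := by
  have := hu.sum_inner_products_le (WithLp.toLp 2 x) (s := Finset.univ)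
  have hinner : ∀ i, inner ℝ (u i) (WithLp.toLp 2 x) = ⇑(u i) ⬝ᵥ x := fun i => by
    rw [EuclideanSpace.inner_eq_star_dotProduct, star_trivial, dotProduct_comm]
  have hnorm : ‖WithLp.toLp 2 x‖ ^ 2 = x ⬝ᵥ x := by
    rw [← real_inner_self_eq_norm_sq, EuclideanSpace.inner_toLp_toLp, star_trivial]
  simpa only [hinner, hnorm, Real.norm_eq_abs, sq_abs] using this

theorem frob_vecMul_le_of_orthonormal [Fintype ι] {u : ι → EuclideanSpace ℝ m}
    (hu : Orthonormal ℝ u) (F : Matrix m κ ℝ) : frob (of fun i => ⇑(u i) ᵥ* F) ≤ frob F := by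
  refine Real.sqrt_le_sqrt ?_
  rw [Finset.sum_comm, Finset.sum_comm (γ := m)]
  refine Finset.sum_le_sum fun k _ => ?_
  exact (sum_sq_dotProduct_le_of_orthonormal hu (Fᵀ k)).trans_eq
    (by simp only [dotProduct, transpose_apply, sq])

theorem sum_dotProduct_mulVec_le_frob_mul_frob [Fintype ι] {u : ι → EuclideanSpace ℝ m}
    {v : ι → EuclideanSpace ℝ n} (hu : Orthonormal ℝ u) (hv : Orthonormal ℝ v)
    (F : Matrix m κ ℝ) (G : Matrix n κ ℝ) :
    ∑ i, ⇑(u i) ⬝ᵥ (F * Gᵀ) *ᵥ ⇑(v i) ≤ frob F * frob G := calc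
  _ = ∑ i, ∑ k, (of fun i => ⇑(u i) ᵥ* F) i k * (of fun i => ⇑(v i) ᵥ* G) i k := by
    refine Finset.sum_congr rfl fun i _ => ?_
    rw [← mulVec_mulVec, dotProduct_mulVec, mulVec_transpose]
    rfl
  _ ≤ _ := sum_sum_mul_le_frob_mul_frob _ _
  _ ≤ frob F * frob G := mul_le_mul (frob_vecMul_le_of_orthonormal hu F)
    (frob_vecMul_le_of_orthonormal hv G) (frob_nonneg _) (frob_nonneg _)

end Frobenius

section SingularValues

variable {m n : Type*} [Fintype m] [Fintype n] [DecidableEq n] (P : Matrix m n ℝ)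

local notation "μ" => IsHermitian.eigenvalues (isHermitian_transpose_mul_self P)
local notation "v" => IsHermitian.eigenvectorBasis (isHermitian_transpose_mul_self P)

theorem eigenvalues_transpose_mul_self_nonneg (i : n) : 0 ≤ μ i :=
  (posSemidef_conjTranspose_mul_self P).eigenvalues_nonneg i

theorem mulVec_dotProduct_mulVec_eigenvectorBasis (i j : n) :
    (P *ᵥ ⇑(v i)) ⬝ᵥ (P *ᵥ ⇑(v j)) = if i = j then μ i else 0 := by
  rw [dotProduct_mulVec, ← vecMul_transpose, vecMul_vecMul, ← dotProduct_mulVec,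
    (isHermitian_transpose_mul_self P).mulVec_eigenvectorBasis, dotProduct_smul, smul_eq_mul,
    dotProduct_eq_ite_of_orthonormal (v).orthonormal]
  split_ifs with h <;> simp [h]

theorem mulVec_eigenvectorBasis_eq_zero {i : n} (hi : μ i = 0) : P *ᵥ ⇑(v i) = 0 := by
  rw [← dotProduct_self_eq_zero, mulVec_dotProduct_mulVec_eigenvectorBasis, if_pos rfl, hi]

theorem sum_mulVec_eigenvectorBasis_mul (a : m) (b : n) :
    ∑ i, (P *ᵥ ⇑(v i)) a * v i b = P a b := by
  set V : unitaryGroup n ℝ := (isHermitian_transpose_mul_self P).eigenvectorUnitary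
  calc ∑ i, (P *ᵥ ⇑(v i)) a * v i b = (P * (V : Matrix n n ℝ) * star (V : Matrix n n ℝ)) a b := by
        simp [V, mul_apply, mulVec, dotProduct]
    _ = P a b := by rw [Matrix.mul_assoc, Unitary.mul_star_self_of_mem V.2, Matrix.mul_one]

theorem orthonormal_smul_mulVec_eigenvectorBasis :
    Orthonormal ℝ fun i : {i // μ i ≠ 0} => WithLp.toLp 2 ((√(μ i))⁻¹ • P *ᵥ ⇑(v i)) := by
  rw [orthonormal_iff_ite]
  rintro ⟨i, hi⟩ ⟨j, hj⟩
  rw [EuclideanSpace.inner_toLp_toLp, star_trivial, smul_dotProduct, dotProduct_smul,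
    mulVec_dotProduct_mulVec_eigenvectorBasis]
  by_cases h : i = j
  · subst h
    have hpos := (eigenvalues_transpose_mul_self_nonneg P i).lt_of_ne' hi
    simp only [if_true, smul_eq_mul]
    field_simp
    exact (Real.sq_sqrt hpos.le).symm
  · simp [h, Ne.symm h]

theorem sum_sqrt_eigenvalues_subtype :
    ∑ i : {i // μ i ≠ 0}, √(μ i) = ∑ i, √(μ i) :=
  Fintype.sum_subtype_of_eq_zero (fun i => μ i ≠ 0) (f := fun i => √(μ i)) fun i hi => by
    rw [not_not.mp hi, Real.sqrt_zero]

theorem sum_sqrt_eigenvalues_le_frob_mul_frob {K : Type*} [Fintype K] (F : Matrix m K ℝ)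
    (G : Matrix n K ℝ) (hP : P = F * Gᵀ) : ∑ i, √(μ i) ≤ frob F * frob G := by
  have hv : Orthonormal ℝ fun i : {i // μ i ≠ 0} => v i :=
    (v).orthonormal.comp _ Subtype.val_injective
  calc ∑ i, √(μ i) = ∑ i : {i // μ i ≠ 0}, √(μ i) := (sum_sqrt_eigenvalues_subtype P).symm
    _ = ∑ i : {i // μ i ≠ 0}, ((√(μ i))⁻¹ • P *ᵥ ⇑(v i)) ⬝ᵥ P *ᵥ ⇑(v i) := by
      refine Finset.sum_congr rfl fun i _ => ?_
      rw [smul_dotProduct, mulVec_dotProduct_mulVec_eigenvectorBasis, if_pos rfl, smul_eq_mul,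
        inv_mul_eq_div, Real.div_sqrt]
    _ ≤ frob F * frob G := hP ▸ sum_dotProduct_mulVec_le_frob_mul_frob
      (orthonormal_smul_mulVec_eigenvectorBasis P) hv F G

theorem exists_mul_transpose_eq_frob_eq_sqrt {K : Type*} [Fintype K] (e : K ≃ {i // μ i ≠ 0}) :
    ∃ (F : Matrix m K ℝ) (G : Matrix n K ℝ),
      P = F * Gᵀ ∧ frob F = √(∑ i, √(μ i)) ∧ frob G = √(∑ i, √(μ i)) := by
  set q : K → ℝ := fun k => √√(μ (e k))
  have hq_pos (k : K) : 0 < q k := by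
    have := (eigenvalues_transpose_mul_self_nonneg P (e k)).lt_of_ne' (e k).2
    positivity
  have hq_sq (k : K) : q k ^ 2 = √(μ (e k)) := Real.sq_sqrt (Real.sqrt_nonneg _)
  refine ⟨(of fun k => (q k)⁻¹ • P *ᵥ ⇑(v (e k)))ᵀ, (of fun k => q k • ⇑(v (e k)))ᵀ, ?_, ?_, ?_⟩
  · ext a b
    have hzero (i : n) (hi : ¬μ i ≠ 0) : (P *ᵥ ⇑(v i)) a * v i b = 0 := by
      rw [mulVec_eigenvectorBasis_eq_zero P (not_not.mp hi), Pi.zero_apply, zero_mul]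
    rw [transpose_transpose, ← sum_mulVec_eigenvectorBasis_mul P a b,
      ← Fintype.sum_subtype_of_eq_zero _ hzero, ← e.sum_comp, mul_apply]
    refine Finset.sum_congr rfl fun k _ => ?_
    have := (hq_pos k).ne'
    simp only [transpose_apply, of_apply, Pi.smul_apply, smul_eq_mul]
    field_simp
  · rw [frob_transpose_of, ← sum_sqrt_eigenvalues_subtype, ← e.sum_comp]
    congr 1
    refine Finset.sum_congr rfl fun k _ => ?_
    rw [smul_dotProduct, dotProduct_smul, mulVec_dotProduct_mulVec_eigenvectorBasis, if_pos rfl,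
      smul_eq_mul, smul_eq_mul, ← mul_assoc, ← mul_inv, ← sq, hq_sq, inv_mul_eq_div,
      Real.div_sqrt]
  · rw [frob_transpose_of, ← sum_sqrt_eigenvalues_subtype, ← e.sum_comp]
    congr 1
    refine Finset.sum_congr rfl fun k _ => ?_
    rw [smul_dotProduct, dotProduct_smul, dotProduct_eq_ite_of_orthonormal (v).orthonormal,
      if_pos rfl, smul_eq_mul, smul_eq_mul, ← mul_assoc, ← sq, hq_sq, mul_one]

end SingularValues

/-- The square root of the nuclear norm of `P` is the minimum of
`(1/2) (‖F‖_F + ‖G‖_F)` over all factorizations `P = F * Gᵀ` with rank-many columns. -/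
theorem sqrt_nuclearNorm_eq_min_factorization {N T : ℕ} (P : Matrix (Fin N) (Fin T) ℝ) :
    IsLeast {c : ℝ | ∃ (F : Matrix (Fin N) (Fin P.rank) ℝ) (G : Matrix (Fin T) (Fin P.rank) ℝ),
        P = F * Gᵀ ∧ c = (1 / 2) * (frob F + frob G)}
      (Real.sqrt (nuclearNorm P)) := by
  have hA := isHermitian_transpose_mul_self P
  have hrank : Fintype.card (Fin P.rank) = Fintype.card {i // hA.eigenvalues i ≠ 0} := by
    rw [Fintype.card_fin, ← rank_transpose_mul_self, hA.rank_eq_card_non_zero_eigs]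
  obtain ⟨F, G, hFG, hF, hG⟩ :=
    exists_mul_transpose_eq_frob_eq_sqrt P (Fintype.equivOfCardEq hrank)
  refine ⟨⟨F, G, hFG, ?_⟩, ?_⟩
  · rw [hF, hG, nuclearNorm]
    ring
  rintro c ⟨F, G, hFG, rfl⟩
  have hle : nuclearNorm P ≤ frob F * frob G := sum_sqrt_eigenvalues_le_frob_mul_frob P F G hFG
  rw [Real.sqrt_le_left (by have := frob_nonneg F; have := frob_nonneg G; positivity)]
  nlinarith [four_mul_le_sq_add (frob F) (frob G)]
end

section
/- Let y ∈ ℝ^n, X ∈ ℝ^{n×p}, μ > 0, and consider minimizing f(θ) = ‖y − Xθ‖₂² + μ‖θ‖₂ over θ ∈ ℝ^p. If ‖Xᵀy‖₂ ≤ μ/2, then θ = 0 is a global minimizer. -/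
/-!
Expanding the square, `f θ - f 0 = ‖Xθ‖₂² - 2⟪Xᵀy, θ⟫ + μ‖θ‖₂`, and by Cauchy–Schwarz
`2⟪Xᵀy, θ⟫ ≤ 2‖Xᵀy‖₂‖θ‖₂ ≤ μ‖θ‖₂`, so the difference is nonnegative.
-/

open Matrix

/-- Euclidean norm of a finite real vector. -/
noncomputable def euclidNorm {ι : Type*} [Fintype ι] (v : ι → ℝ) : ℝ :=
  Real.sqrt (∑ i, (v i) ^ 2)

section euclidNorm

variable {ι : Type*} [Fintype ι]

lemma euclidNorm_eq_norm_toLp (v : ι → ℝ) :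
    euclidNorm v = ‖(WithLp.toLp 2 v : EuclideanSpace ℝ ι)‖ := by
  simp [euclidNorm, EuclideanSpace.norm_eq]

lemma dotProduct_eq_inner_toLp (v w : ι → ℝ) :
    v ⬝ᵥ w = inner ℝ (WithLp.toLp 2 v : EuclideanSpace ℝ ι) (WithLp.toLp 2 w) := by
  simp [EuclideanSpace.inner_eq_star_dotProduct, dotProduct_comm]

lemma euclidNorm_zero : euclidNorm (0 : ι → ℝ) = 0 := by
  simp [euclidNorm]

lemma dotProduct_le_euclidNorm_mul_euclidNorm (v w : ι → ℝ) :
    v ⬝ᵥ w ≤ euclidNorm v * euclidNorm w := by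
  rw [dotProduct_eq_inner_toLp, euclidNorm_eq_norm_toLp, euclidNorm_eq_norm_toLp]
  exact real_inner_le_norm _ _

lemma euclidNorm_sub_sq (v w : ι → ℝ) :
    euclidNorm (v - w) ^ 2 = euclidNorm v ^ 2 - 2 * (v ⬝ᵥ w) + euclidNorm w ^ 2 := by
  simp only [euclidNorm_eq_norm_toLp, dotProduct_eq_inner_toLp, WithLp.toLp_sub]
  exact norm_sub_sq_real _ _

end euclidNorm

theorem zero_minimizes_of_small_correlation_general {n p : ℕ} (y : Fin n → ℝ)
    (X : Matrix (Fin n) (Fin p) ℝ) (μ : ℝ)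
    (h : euclidNorm (Xᵀ.mulVec y) ≤ μ / 2) :
    ∀ θ : Fin p → ℝ,
      euclidNorm (y - X.mulVec (0 : Fin p → ℝ)) ^ 2 + μ * euclidNorm (0 : Fin p → ℝ) ≤
        euclidNorm (y - X.mulVec θ) ^ 2 + μ * euclidNorm θ := by
  intro θ
  have correlation_le : y ⬝ᵥ X *ᵥ θ ≤ μ / 2 * euclidNorm θ := by
    rw [dotProduct_mulVec, ← mulVec_transpose]
    exact (dotProduct_le_euclidNorm_mul_euclidNorm _ _).trans
      (mul_le_mul_of_nonneg_right h (Real.sqrt_nonneg _))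
  rw [mulVec_zero, sub_zero, euclidNorm_zero, mul_zero, add_zero, euclidNorm_sub_sq]
  linarith [sq_nonneg (euclidNorm (X *ᵥ θ))]

/-- If `‖Xᵀy‖₂ ≤ μ/2` then `θ = 0` globally minimizes `‖y - Xθ‖₂² + μ‖θ‖₂`. -/
theorem zero_minimizes_of_small_correlation {n p : ℕ} (y : Fin n → ℝ)
    (X : Matrix (Fin n) (Fin p) ℝ) (μ : ℝ) (hμ : 0 < μ)
    (h : euclidNorm (Xᵀ.mulVec y) ≤ μ / 2) :
    ∀ θ : Fin p → ℝ,
      euclidNorm (y - X.mulVec (0 : Fin p → ℝ)) ^ 2 + μ * euclidNorm (0 : Fin p → ℝ) ≤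
        euclidNorm (y - X.mulVec θ) ^ 2 + μ * euclidNorm θ :=
  zero_minimizes_of_small_correlation_general y X μ h
end
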